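/- Let f ∈ F, f ≠ 0, be given by an admissible linear system 𝒜 = (u, A, v) of dimension n whose left family and right family are each K-linearly independent and such that 1 ∉ L(𝒜) and 1 ∉ R(𝒜). Then the standard inverse 𝒜⁻¹ = (e₁, [[Σ_n v, −Σ_n A Σ_n], [0, u Σ_n]], e_{n+1}), which is an admissible linear system of dimension n+1 for f⁻¹, also has K-linearly independent left family and K-linearly independent right family. -/

import Mathlib

/-!
With `B = A⁻¹`, the system matrix `[[Σ v, -Σ A Σ], [0, e₁ Σ]]` of `𝒜⁻¹` has the invertible block
`-Σ A Σ`, so it can be inverted explicitly by block elimination, with the scalar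
`e₁ Σ (Σ B Σ) Σ v = e₁ B v = f` as pivot. Reading off this inverse, the left family of `𝒜⁻¹` is `(1, Σ s) f⁻¹` and its right
family is `f⁻¹ (t Σ, 1)`. Adjoining `1` to an independent family keeps it independent exactly
when `1` is outside its span, and multiplying by `f⁻¹ ≠ 0` on either side is injective.
-/

open Matrix

/-- The row vector `e₁ = (1,0,…,0)`. -/
def e1Row (F : Type*) [Semiring F] (n : ℕ) [NeZero n] : Matrix (Fin 1) (Fin n) F :=
  Matrix.of fun _ j => if j = 0 then 1 else 0

/-- The permutation matrix `Σ_n` reversing the order of rows/columns. -/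
def revMat (F : Type*) [Semiring F] (n : ℕ) : Matrix (Fin n) (Fin n) F :=
  Matrix.of fun p q => if q = p.rev then 1 else 0

section Reversal

variable {F : Type*} [Semiring F] {n : ℕ} {m : Type*}

lemma revMat_mul_apply (M : Matrix (Fin n) m F) (p : Fin n) (q : m) :
    (revMat F n * M) p q = M p.rev q := by
  simp [revMat, Matrix.mul_apply]

lemma mul_revMat_apply [Fintype m] (M : Matrix m (Fin n) F) (p : m) (q : Fin n) :
    (M * revMat F n) p q = M p q.rev := by
  simp [revMat, Matrix.mul_apply, eq_comm (a := q), Fin.rev_eq_iff]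

lemma range_comp_rev {α : Type*} (g : Fin n → α) :
    Set.range (fun j : Fin n => g j.rev) = Set.range g :=
  Fin.rev_surjective.range_comp g

lemma revMat_mul_revMat : revMat F n * revMat F n = 1 := by
  ext p q
  rw [revMat_mul_apply]
  simp [revMat, Matrix.one_apply, eq_comm]

lemma revMat_mul_revMat_mul (M : Matrix (Fin n) m F) : revMat F n * (revMat F n * M) = M := by
  rw [← Matrix.mul_assoc, revMat_mul_revMat, Matrix.one_mul]

lemma revMat_conj_mul_eq_one {A B : Matrix (Fin n) (Fin n) F} (h : A * B = 1) :
    revMat F n * A * revMat F n * (revMat F n * B * revMat F n) = 1 :=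
  calc _ = revMat F n * (A * (revMat F n * revMat F n) * B) * revMat F n := by
        simp only [Matrix.mul_assoc]
    _ = 1 := by rw [revMat_mul_revMat, Matrix.mul_one, h, Matrix.mul_one, revMat_mul_revMat]

lemma e1Row_mul_apply [NeZero n] (M : Matrix (Fin n) m F) (i : Fin 1) (j : m) :
    (e1Row F n * M) i j = M 0 j := by
  simp [e1Row, Matrix.mul_apply]

end Reversal

section BlockInverse

variable {F : Type*} [Ring F] {m m' ι : Type*} [Fintype m] [Fintype m'] [Fintype ι]
  [DecidableEq ι]

/-- The inverse of `fromBlocks x (-M) 0 y` when `N = M⁻¹` and `c = (y * N * x)⁻¹`. -/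
def blockInverse (x : Matrix m ι F) (N : Matrix m' m F) (y : Matrix ι m' F) (c : Matrix ι ι F) :
    Matrix (ι ⊕ m') (m ⊕ ι) F :=
  fromBlocks (c * y * N) c (N * x * c * y * N - N) (N * x * c)

variable {x : Matrix m ι F} {M : Matrix m m' F} {N : Matrix m' m F} {y : Matrix ι m' F}
  {c : Matrix ι ι F}

lemma fromBlocks_mul_blockInverse [DecidableEq m] (hMN : M * N = 1) (hc : y * N * x * c = 1) :
    fromBlocks x (-M) 0 y * blockInverse x N y c = 1 := by
  have hc' : ∀ Z : Matrix ι m F, y * (N * (x * (c * Z))) = Z := fun Z => by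
    simp only [← Matrix.mul_assoc, hc, Matrix.one_mul]
  rw [blockInverse, fromBlocks_multiply, ← fromBlocks_one]
  simp only [Matrix.mul_assoc, Matrix.mul_sub, Matrix.neg_mul, Matrix.zero_mul, zero_add]
  congr 1
  · rw [← Matrix.mul_assoc M N, hMN, Matrix.one_mul]
    abel
  · rw [← Matrix.mul_assoc M N, hMN, Matrix.one_mul, add_neg_cancel]
  · rw [hc', sub_self]
  · simpa only [Matrix.mul_assoc] using hc

lemma blockInverse_mul_fromBlocks [DecidableEq m'] (hNM : N * M = 1)
    (hc : c * (y * N * x) = 1) :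
    blockInverse x N y c * fromBlocks x (-M) 0 y = 1 := by
  simp only [Matrix.mul_assoc] at hc
  rw [blockInverse, fromBlocks_multiply, ← fromBlocks_one]
  simp only [Matrix.mul_assoc, Matrix.sub_mul, Matrix.mul_neg, Matrix.mul_zero, add_zero, hNM,
    hc, Matrix.mul_one]
  congr 1 <;> abel

lemma blockInverse_mul_fromRows_zero_one :
    blockInverse x N y c * (fromRows 0 1 : Matrix (m ⊕ ι) ι F) = fromRows c (N * x * c) := by
  rw [blockInverse, fromBlocks_mul_fromRows]
  simp

end BlockInverse

section LinearIndependence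

variable {K V ι ι' : Type*} [DivisionRing K] [AddCommGroup V] [Module K V] [Unique ι']
  {g : ι → V} {x : V}

lemma LinearIndependent.sum_elim_const_left (hg : LinearIndependent K g)
    (hx : x ∉ Submodule.span K (Set.range g)) :
    LinearIndependent K (Sum.elim (fun _ : ι' => x) g) := by
  refine .sum_type (linearIndependent_unique_iff.mpr ?_) hg ?_
  · rintro rfl
    exact hx (zero_mem _)
  · rw [Set.range_const]
    exact (Submodule.disjoint_span_singleton_of_notMem hx).symm

lemma LinearIndependent.sum_elim_const_right (hg : LinearIndependent K g)
    (hx : x ∉ Submodule.span K (Set.range g)) :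
    LinearIndependent K (Sum.elim g (fun _ : ι' => x)) := by
  rw [← Sum.elim_swap]
  exact (hg.sum_elim_const_left hx).comp Sum.swap Sum.swap_leftInverse.injective

end LinearIndependence

section Multiplication

variable {K F ι : Type*} [CommRing K] [DivisionRing F] [Algebra K F] {g : ι → F} {a : F}

lemma LinearIndependent.mul_const (hg : LinearIndependent K g) (ha : a ≠ 0) :
    LinearIndependent K fun i => g i * a :=
  hg.map' (LinearMap.mulRight K a) (LinearMap.ker_eq_bot.mpr (mul_left_injective₀ ha))

lemma LinearIndependent.const_mul (hg : LinearIndependent K g) (ha : a ≠ 0) :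
    LinearIndependent K fun i => a * g i :=
  hg.map' (LinearMap.mulLeft K a) (LinearMap.ker_eq_bot.mpr (mul_right_injective₀ ha))

end Multiplication

section StandardInverse

variable {F : Type*} {n : ℕ} [NeZero n]

/-- The inverse of the system matrix `[[Σ w, -Σ A Σ], [0, e₁ Σ]]` of the standard inverse,
for `B = A⁻¹` and `a = (e₁ B w)⁻¹`. -/
def standardInverseInv [Ring F] (B : Matrix (Fin n) (Fin n) F) (w : Matrix (Fin n) (Fin 1) F)
    (a : F) : Matrix (Fin 1 ⊕ Fin n) (Fin n ⊕ Fin 1) F :=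
  blockInverse (revMat F n * w) (revMat F n * B * revMat F n) (e1Row F n * revMat F n)
    (scalar (Fin 1) a)

section Ring

variable [Ring F] (B : Matrix (Fin n) (Fin n) F) (w : Matrix (Fin n) (Fin 1) F) (a : F)

lemma standardInverseInv_mul_fromRows_apply (p : Fin 1 ⊕ Fin n) :
    (standardInverseInv B w a * (fromRows 0 1 : Matrix (Fin n ⊕ Fin 1) (Fin 1) F)) p 0 =
      Sum.elim (fun _ => 1) (fun j => (B * w) j.rev 0) p * a := by
  rw [standardInverseInv, blockInverse_mul_fromRows_zero_one]
  rcases p with i | j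
  · simp [Subsingleton.elim i 0]
  · simp only [fromRows_apply_inr, Sum.elim_inr, Matrix.mul_assoc, revMat_mul_revMat_mul,
      revMat_mul_apply]
    rw [← Matrix.mul_assoc B]
    simp [scalar_apply, mul_diagonal]

lemma standardInverseInv_inl_zero_apply (q : Fin n ⊕ Fin 1) :
    standardInverseInv B w a (Sum.inl 0) q =
      a * Sum.elim (fun j => B 0 j.rev) (fun _ => 1) q := by
  rcases q with j | i
  · simp only [standardInverseInv, blockInverse, fromBlocks_apply₁₁, Sum.elim_inl,
      Matrix.mul_assoc, revMat_mul_revMat_mul]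
    simp [scalar_apply, diagonal_mul, e1Row_mul_apply, mul_revMat_apply]
  · simp [standardInverseInv, blockInverse, Subsingleton.elim i 0]

end Ring

variable [DivisionRing F] {A B : Matrix (Fin n) (Fin n) F} {w : Matrix (Fin n) (Fin 1) F}

lemma e1Row_mul_revMat_conj :
    e1Row F n * revMat F n * (revMat F n * B * revMat F n) * (revMat F n * w) =
      scalar (Fin 1) ((B * w) 0 0) := by
  simp only [Matrix.mul_assoc, revMat_mul_revMat_mul]
  ext i j
  simp [e1Row_mul_apply, Subsingleton.elim i 0, Subsingleton.elim j 0]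

lemma fromBlocks_mul_standardInverseInv (hAB : A * B = 1) (hw : (B * w) 0 0 ≠ 0) :
    fromBlocks (revMat F n * w) (-(revMat F n * A * revMat F n)) 0 (e1Row F n * revMat F n) *
      standardInverseInv B w ((B * w) 0 0)⁻¹ = 1 := by
  refine fromBlocks_mul_blockInverse (revMat_conj_mul_eq_one hAB) ?_
  rw [e1Row_mul_revMat_conj, ← map_mul, mul_inv_cancel₀ hw, map_one]

lemma standardInverseInv_mul_fromBlocks (hBA : B * A = 1) (hw : (B * w) 0 0 ≠ 0) :
    standardInverseInv B w ((B * w) 0 0)⁻¹ *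
      fromBlocks (revMat F n * w) (-(revMat F n * A * revMat F n)) 0 (e1Row F n * revMat F n) =
      1 := by
  refine blockInverse_mul_fromBlocks (revMat_conj_mul_eq_one hBA) ?_
  rw [e1Row_mul_revMat_conj, ← map_mul, inv_mul_cancel₀ hw, map_one]

end StandardInverse

/-- Inverse of type (0,0): if `f ≠ 0` is given by a minimal ALS `(e₁, A, v)` of
dimension `n` with `1 ∉ L(𝒜)` and `1 ∉ R(𝒜)`, then the standard inverse
`𝒜⁻¹ = (e₁, [[Σ v, −Σ A Σ], [0, e₁ Σ]], e_{n+1})`, an ALS of dimension `n + 1` for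
`f⁻¹`, also has `K`-linearly independent left and right families. -/
theorem inverse_type_zero_zero {K F : Type*} [Field K] [DivisionRing F] [Algebra K F]
    {n : ℕ} [NeZero n]
    (f : F) (hne : f ≠ 0)
    (A B : Matrix (Fin n) (Fin n) F) (v : Matrix (Fin n) (Fin 1) K)
    (hAB : A * B = 1) (hBA : B * A = 1)
    (hf : f = (B * v.map (algebraMap K F)) 0 0)
    (hleft : LinearIndependent K fun p => (B * v.map (algebraMap K F)) p 0)
    (hright : LinearIndependent K fun q => B 0 q)
    (honeL : (1 : F) ∉ Submodule.span K
      (Set.range fun p => (B * v.map (algebraMap K F)) p 0))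
    (honeR : (1 : F) ∉ Submodule.span K (Set.range fun q => B 0 q)) :
    let A' : Matrix (Fin n ⊕ Fin 1) (Fin 1 ⊕ Fin n) F :=
      fromBlocks (revMat F n * v.map (algebraMap K F)) (-(revMat F n * A * revMat F n))
        0 (e1Row F n * revMat F n)
    let v' : Matrix (Fin n ⊕ Fin 1) (Fin 1) F :=
      fromRows 0 (1 : Matrix (Fin 1) (Fin 1) F)
    ∃ B' : Matrix (Fin 1 ⊕ Fin n) (Fin n ⊕ Fin 1) F,
      A' * B' = 1 ∧ B' * A' = 1 ∧
      (B' * v') (Sum.inl 0) 0 = f⁻¹ ∧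
      (LinearIndependent K fun p => (B' * v') p 0) ∧
      (LinearIndependent K fun q => B' (Sum.inl 0) q) := by
  intro A' v'
  subst hf
  refine ⟨standardInverseInv B _ ((B * v.map (algebraMap K F)) 0 0)⁻¹,
    fromBlocks_mul_standardInverseInv hAB hne, standardInverseInv_mul_fromBlocks hBA hne,
    ?_, ?_, ?_⟩
  · simp [v', standardInverseInv_mul_fromRows_apply]
  · simp only [v', standardInverseInv_mul_fromRows_apply]
    refine .mul_const (.sum_elim_const_left (hleft.comp Fin.rev Fin.rev_injective) ?_)
      (inv_ne_zero hne)
    rwa [range_comp_rev fun p => (B * v.map (algebraMap K F)) p 0]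
  · simp only [standardInverseInv_inl_zero_apply]
    refine .const_mul (.sum_elim_const_right (hright.comp Fin.rev Fin.rev_injective) ?_)
      (inv_ne_zero hne)
    rwa [range_comp_rev fun q => B 0 q]
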